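/- Let n and k be positive integers. Then ∑_{d | n} μ(d) ω(d) (n/d)^k = J_k(n) · ∑_{p | n} 1/(1 - p^k), where the sum on the right runs over the distinct primes p dividing n (and is 0 when n = 1). -/

import Mathlib

/-!
Only squarefree divisors `d = ∏_{p ∈ s} p`, `s ⊆ primeFactors n`, contribute, and for them
`μ(d) ω(d) (n/d)^k = n^k · #s · ∏_{p ∈ s} x_p` with `x_p = -1/p^k`. Counting each `s` once for
each of its elements gives `∑_s #s ∏_{p ∈ s} x_p = ∑_p x_p ∏_{q ≠ p} (1 + x_q)`, and the identity
`x_p = (1 + x_p) / (1 - p^k)` (valid as `p^k ≠ 1` for `k > 0`) turns this into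
`∏_q (1 + x_q) · ∑_p 1/(1 - p^k) = J_k(n)/n^k · ∑_p 1/(1 - p^k)`.
-/

open ArithmeticFunction

/-- Jordan's totient function `J_k(n) = n^k ∏_{p ∣ n} (1 - 1/p^k)`, as a complex number. -/
noncomputable def jordanTotient (k n : ℕ) : ℂ :=
  (n : ℂ) ^ k * ∏ p ∈ n.primeFactors, (1 - 1 / (p : ℂ) ^ k)

open Finset

namespace Finset

variable {ι R : Type*} [CommSemiring R] [DecidableEq ι]

theorem sum_filter_mem_powerset_prod {s : Finset ι} {i : ι} (hi : i ∈ s) (g : ι → R) :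
    ∑ t ∈ s.powerset with i ∈ t, ∏ j ∈ t, g j = g i * ∏ j ∈ s.erase i, (1 + g j) := by
  rw [sum_filter]
  conv_lhs => rw [← insert_erase hi]
  rw [sum_powerset_insert (notMem_erase i s), prod_one_add, mul_sum]
  have hnot : ∀ t ∈ (s.erase i).powerset, i ∉ t := fun t ht hit =>
    notMem_erase i s (mem_powerset.mp ht hit)
  rw [sum_eq_zero fun t ht => if_neg (hnot t ht), zero_add]
  exact sum_congr rfl fun t ht => by rw [if_pos (mem_insert_self i t), prod_insert (hnot t ht)]

theorem sum_powerset_card_mul_prod (s : Finset ι) (g : ι → R) :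
    ∑ t ∈ s.powerset, (#t : R) * ∏ j ∈ t, g j = ∑ i ∈ s, g i * ∏ j ∈ s.erase i, (1 + g j) := by
  calc ∑ t ∈ s.powerset, (#t : R) * ∏ j ∈ t, g j
      = ∑ t ∈ s.powerset, ∑ _i ∈ t, ∏ j ∈ t, g j := by simp only [sum_const, nsmul_eq_mul]
    _ = ∑ i ∈ s, ∑ t ∈ s.powerset with i ∈ t, ∏ j ∈ t, g j :=
      sum_comm' fun t i => by
        simp only [mem_filter, mem_powerset]
        exact ⟨fun h => ⟨⟨h.1, h.2⟩, h.1 h.2⟩, fun h => ⟨h.1.1, h.1.2⟩⟩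
    _ = ∑ i ∈ s, g i * ∏ j ∈ s.erase i, (1 + g j) :=
      sum_congr rfl fun i hi => sum_filter_mem_powerset_prod hi g

theorem sum_mul_prod_erase_eq_prod_mul_sum (s : Finset ι) {f g c : ι → R}
    (h : ∀ i ∈ s, g i = f i * c i) :
    ∑ i ∈ s, g i * ∏ j ∈ s.erase i, f j = (∏ i ∈ s, f i) * ∑ i ∈ s, c i := by
  rw [mul_sum]
  refine sum_congr rfl fun i hi => ?_
  rw [h i hi, ← mul_prod_erase s f hi]
  ring

end Finset

theorem Nat.sum_divisors_moebius_mul_eq_sum_powerset {R : Type*} [CommRing R] {n : ℕ}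
    (hn : n ≠ 0) (f : ℕ → R) :
    ∑ d ∈ n.divisors, (moebius d : R) * f d =
      ∑ s ∈ n.primeFactors.powerset, (-1) ^ #s * f (∏ p ∈ s, p) := by
  have hsquarefree : ∀ d ∈ n.divisors, (moebius d : R) * f d ≠ 0 → Squarefree d := by
    intro d _ hd
    contrapose! hd
    rw [moebius_eq_zero_of_not_squarefree hd, Int.cast_zero, zero_mul]
  rw [← sum_filter_of_ne hsquarefree, Nat.sum_divisors_filter_squarefree hn, Nat.factors_eq,
    List.toFinset_coe, Nat.toFinset_factors]
  refine sum_congr rfl fun s hs => ?_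
  have hprime : ∀ p ∈ s, p.Prime := fun p hp =>
    Nat.prime_of_mem_primeFactors (mem_powerset.mp hs hp)
  rw [show s.val.prod = ∏ p ∈ s, p from s.prod_val,
    isMultiplicative_moebius.map_prod_of_prime s hprime,
    prod_congr rfl fun p hp => moebius_apply_prime (hprime p hp)]
  simp

/-- For positive integers `n, k`,
`∑_{d ∣ n} μ(d) ω(d) (n/d)^k = J_k(n) · ∑_{p ∣ n} 1/(1 - p^k)`. -/
theorem stmt_7 (n k : ℕ) (hn : 0 < n) (hk : 0 < k) :
    ∑ d ∈ n.divisors, (moebius d : ℂ) * (d.primeFactors.card : ℂ) * ((n / d : ℕ) : ℂ) ^ k =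
      jordanTotient k n * ∑ p ∈ n.primeFactors, 1 / (1 - (p : ℂ) ^ k) := by
  have hprime : ∀ p ∈ n.primeFactors, p.Prime := fun p hp => Nat.prime_of_mem_primeFactors hp
  have hterm : ∀ s ∈ n.primeFactors.powerset,
      (-1) ^ #s * ((#(∏ p ∈ s, p).primeFactors : ℂ) * ((n / ∏ p ∈ s, p : ℕ) : ℂ) ^ k) =
        (n : ℂ) ^ k * (#s * ∏ p ∈ s, -(1 / (p : ℂ) ^ k)) := by
    intro s hs
    have hs' : ∀ p ∈ s, p.Prime := fun p hp => hprime p (mem_powerset.mp hs hp)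
    have hdvd : ∏ p ∈ s, p ∣ n :=
      (prod_dvd_prod_of_subset _ _ _ (mem_powerset.mp hs)).trans (Nat.prod_primeFactors_dvd n)
    rw [Nat.primeFactors_prod hs', Nat.cast_div hdvd
      (Nat.cast_ne_zero.mpr (prod_ne_zero_iff.mpr fun p hp => (hs' p hp).ne_zero))]
    simp only [prod_neg, div_pow, Nat.cast_prod, prod_pow, one_div, prod_inv_distrib]
    ring
  have hratio : ∀ p ∈ n.primeFactors,
      -(1 / (p : ℂ) ^ k) = (1 + -(1 / (p : ℂ) ^ k)) * (1 / (1 - (p : ℂ) ^ k)) := by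
    intro p hp
    have hpk : (p : ℂ) ^ k ≠ 1 := by
      exact_mod_cast (Nat.one_lt_pow hk.ne' (hprime p hp).one_lt).ne'
    have hpk0 : (p : ℂ) ^ k ≠ 0 := by exact_mod_cast (pow_pos (hprime p hp).pos k).ne'
    field_simp [sub_ne_zero.mpr hpk.symm]
    ring
  simp only [mul_assoc]
  rw [Nat.sum_divisors_moebius_mul_eq_sum_powerset hn.ne', sum_congr rfl hterm, ← mul_sum,
    sum_powerset_card_mul_prod, sum_mul_prod_erase_eq_prod_mul_sum _ hratio, jordanTotient]
  simp only [← sub_eq_add_neg, mul_assoc]
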